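/- Let K be given at each point by K(T,T) = -2a_4 T, K(T,V) = a_4 V, K(T,W) = a_4 W, K(V,V) = -a_4 T + a_6 V, K(V,W) = -a_6 W, K(W,W) = -a_4 T - a_6 V with respect to an orthonormal frame {T,V,W} (T timelike). Then the Ricci tensor of the Levi-Civita connection of an affine hypersphere with this K satisfies Riĉ(T,T) = -2(H - 3a_4²), Riĉ(V,V) = Riĉ(W,W) = 2(H - a_4² + a_6²), and all off-diagonal components vanish. -/

import Mathlib

open Matrix

/-- ONB inner product of `ℝ³₁` (first coordinate timelike). -/
def ip (x y : Fin 3 → ℝ) : ℝ := -(x 0 * y 0) + x 1 * y 1 + x 2 * y 2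

/-- The standard orthonormal frame `{T,V,W}`. -/
def bas : Fin 3 → Fin 3 → ℝ := ![![1, 0, 0], ![0, 1, 0], ![0, 0, 1]]

/-- The curvature tensor of an affine hypersphere given by the Gauss equation
`R̂(X,Y)Z = H(h(Y,Z)X − h(X,Z)Y) − [K_X,K_Y]Z`. -/
def Rhat (H : ℝ) (K : (Fin 3 → ℝ) →ₗ[ℝ] (Fin 3 → ℝ) →ₗ[ℝ] (Fin 3 → ℝ))
    (X Y Z : Fin 3 → ℝ) : Fin 3 → ℝ :=
  H • (ip Y Z • X - ip X Z • Y) - (K X (K Y Z) - K Y (K X Z))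

/-- The Ricci tensor `Riĉ(X,Y) = trace (Z ↦ R̂(Z,X)Y)`. -/
noncomputable def Ric (H : ℝ)
    (K : (Fin 3 → ℝ) →ₗ[ℝ] (Fin 3 → ℝ) →ₗ[ℝ] (Fin 3 → ℝ))
    (X Y : Fin 3 → ℝ) : ℝ :=
  ∑ i, Rhat H K (bas i) X Y i

/-!
Tracing the Gauss equation over `Z` gives, for symmetric `K`,
`Riĉ(X,Y) = 2H h(X,Y) - tr K_{K(X,Y)} + tr (K_X ∘ K_Y)`. The given `K` is apolar
(`tr K_Z = 0`), so `Riĉ(X,Y) = 2H h(X,Y) + tr (K_X ∘ K_Y)`, and on the frame `{T,V,W}`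
the traces `tr (K_X ∘ K_Y)` are `6a₄²` at `(T,T)`, `2(a₆² - a₄²)` at `(V,V)` and `(W,W)`,
and `0` off the diagonal.
-/

theorem bas_eq_single (i : Fin 3) : bas i = Pi.single i 1 := by
  fin_cases i <;> ext j <;> fin_cases j <;> rfl

theorem sum_bas_apply_eq_trace (f : (Fin 3 → ℝ) →ₗ[ℝ] Fin 3 → ℝ) :
    ∑ i, f (bas i) i = LinearMap.trace ℝ _ f := by
  rw [LinearMap.trace_eq_matrix_trace ℝ (Pi.basisFun ℝ (Fin 3)), LinearMap.toMatrix_eq_toMatrix',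
    Matrix.trace]
  simp [LinearMap.toMatrix'_apply, bas_eq_single]

theorem sum_ip_bas_mul (X Y : Fin 3 → ℝ) : ∑ i, ip (bas i) Y * X i = ip X Y := by
  simp only [ip, bas, Fin.sum_univ_three, Fin.isValue, cons_val', cons_val_zero, cons_val_fin_one,
    cons_val_one, cons_val]
  ring

theorem Ric_eq {K : (Fin 3 → ℝ) →ₗ[ℝ] (Fin 3 → ℝ) →ₗ[ℝ] (Fin 3 → ℝ)}
    (hK : ∀ X Y, K X Y = K Y X) (H : ℝ) (X Y : Fin 3 → ℝ) :
    Ric H K X Y = 2 * H * ip X Y - LinearMap.trace ℝ _ (K (K X Y))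
      + LinearMap.trace ℝ _ (K X ∘ₗ K Y) := by
  have hsum : ∑ i, bas i i = (3 : ℝ) := by simp [bas_eq_single]
  simp only [Ric, Rhat, Pi.sub_apply, Pi.smul_apply, smul_eq_mul, Finset.sum_sub_distrib,
    ← Finset.mul_sum, hsum, sum_ip_bas_mul, ← sum_bas_apply_eq_trace, LinearMap.comp_apply,
    hK (bas _) (K X Y), hK (bas _) Y]
  ring

structure IsSO2NormalForm (K : (Fin 3 → ℝ) →ₗ[ℝ] (Fin 3 → ℝ) →ₗ[ℝ] (Fin 3 → ℝ)) (a₄ a₆ : ℝ) :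
    Prop where
  symm : ∀ X Y, K X Y = K Y X
  apply_TT : K (bas 0) (bas 0) = (-2 * a₄) • bas 0
  apply_TV : K (bas 0) (bas 1) = a₄ • bas 1
  apply_TW : K (bas 0) (bas 2) = a₄ • bas 2
  apply_VV : K (bas 1) (bas 1) = (-a₄) • bas 0 + a₆ • bas 1
  apply_VW : K (bas 1) (bas 2) = (-a₆) • bas 2
  apply_WW : K (bas 2) (bas 2) = (-a₄) • bas 0 - a₆ • bas 1

namespace IsSO2NormalForm

variable {K : (Fin 3 → ℝ) →ₗ[ℝ] (Fin 3 → ℝ) →ₗ[ℝ] (Fin 3 → ℝ)} {a₄ a₆ : ℝ}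

theorem apply_VT (hK : IsSO2NormalForm K a₄ a₆) : K (bas 1) (bas 0) = a₄ • bas 1 :=
  (hK.symm _ _).trans hK.apply_TV

theorem apply_WT (hK : IsSO2NormalForm K a₄ a₆) : K (bas 2) (bas 0) = a₄ • bas 2 :=
  (hK.symm _ _).trans hK.apply_TW

theorem apply_WV (hK : IsSO2NormalForm K a₄ a₆) : K (bas 2) (bas 1) = (-a₆) • bas 2 :=
  (hK.symm _ _).trans hK.apply_VW

theorem trace_apply_bas (hK : IsSO2NormalForm K a₄ a₆) (a : Fin 3) :
    LinearMap.trace ℝ _ (K (bas a)) = 0 := by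
  rw [← sum_bas_apply_eq_trace]
  fin_cases a <;>
    simp only [Fin.sum_univ_three, Fin.zero_eta, Fin.mk_one, Fin.reduceFinMk, hK.apply_TT,
      hK.apply_TV, hK.apply_TW, hK.apply_VT, hK.apply_VV, hK.apply_VW, hK.apply_WT, hK.apply_WV,
      hK.apply_WW] <;>
    simp [bas]
  ring

theorem trace_apply (hK : IsSO2NormalForm K a₄ a₆) (Z : Fin 3 → ℝ) :
    LinearMap.trace ℝ _ (K Z) = 0 := by
  have : LinearMap.trace ℝ _ ∘ₗ K = 0 :=
    (Pi.basisFun ℝ (Fin 3)).ext fun i => by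
      simpa [bas_eq_single] using hK.trace_apply_bas i
  exact LinearMap.congr_fun this Z

theorem trace_comp_bas (hK : IsSO2NormalForm K a₄ a₆) (a b : Fin 3) :
    LinearMap.trace ℝ _ (K (bas a) ∘ₗ K (bas b)) =
      6 * a₄ ^ 2 * bas a 0 * bas b 0 +
        2 * (a₆ ^ 2 - a₄ ^ 2) * (bas a 1 * bas b 1 + bas a 2 * bas b 2) := by
  rw [← sum_bas_apply_eq_trace]
  fin_cases a <;> fin_cases b <;>
    simp only [Fin.sum_univ_three, Fin.zero_eta, Fin.mk_one, Fin.reduceFinMk, LinearMap.comp_apply,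
      hK.apply_TT, hK.apply_TV, hK.apply_TW, hK.apply_VT, hK.apply_VV, hK.apply_VW, hK.apply_WT,
      hK.apply_WV, hK.apply_WW, map_add, map_sub, map_smul] <;>
    simp [bas] <;> ring

end IsSO2NormalForm

theorem stmt15 (H a₄ a₆ : ℝ)
    (K : (Fin 3 → ℝ) →ₗ[ℝ] (Fin 3 → ℝ) →ₗ[ℝ] (Fin 3 → ℝ))
    (hsymm : ∀ X Y, K X Y = K Y X)
    (h1 : K (bas 0) (bas 0) = (-2 * a₄) • bas 0)
    (h2 : K (bas 0) (bas 1) = a₄ • bas 1)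
    (h3 : K (bas 0) (bas 2) = a₄ • bas 2)
    (h4 : K (bas 1) (bas 1) = (-a₄) • bas 0 + a₆ • bas 1)
    (h5 : K (bas 1) (bas 2) = (-a₆) • bas 2)
    (h6 : K (bas 2) (bas 2) = (-a₄) • bas 0 - a₆ • bas 1) :
    Ric H K (bas 0) (bas 0) = -2 * (H - 3 * a₄ ^ 2) ∧
    Ric H K (bas 1) (bas 1) = 2 * (H - a₄ ^ 2 + a₆ ^ 2) ∧
    Ric H K (bas 2) (bas 2) = 2 * (H - a₄ ^ 2 + a₆ ^ 2) ∧
    Ric H K (bas 0) (bas 1) = 0 ∧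
    Ric H K (bas 0) (bas 2) = 0 ∧
    Ric H K (bas 1) (bas 2) = 0 := by
  have hK : IsSO2NormalForm K a₄ a₆ := ⟨hsymm, h1, h2, h3, h4, h5, h6⟩
  have hRic (a b : Fin 3) : Ric H K (bas a) (bas b) =
      2 * H * ip (bas a) (bas b) + LinearMap.trace ℝ _ (K (bas a) ∘ₗ K (bas b)) := by
    rw [Ric_eq hsymm, hK.trace_apply, sub_zero]
  refine ⟨?_, ?_, ?_, ?_, ?_, ?_⟩ <;>
    simp only [hRic, hK.trace_comp_bas] <;>
    simp [ip, bas] <;>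
    ring
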